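/- arXiv:1003.2220 — 4 statements merged into one kernel-verified Lean document; each statement's English description precedes it below -/
import Mathlib

section
/- For all n, m, α, β, γ ∈ ℕ, the iterated formal partial derivative D^{(n,m)} B#_{α,β,γ} of the box spline symbol satisfies, as an identity in ℝ[z₁,z₂]: D^{(n,m)} B#_{α,β,γ}(z₁,z₂) = Σ_{ℓ=0}^{γ} C(γ,ℓ) · [ Σ_{i=0}^{n} (n!/2^n) C(α+ℓ, n−i) ((1+z₁)/2)^{α+ℓ−(n−i)} C(γ−ℓ, i) ((z₁−1)/2)^{γ−ℓ−i} ] · [ Σ_{j=0}^{m} (m!/2^m) C(β+ℓ, m−j) ((1+z₂)/2)^{β+ℓ−(m−j)} C(γ−ℓ, j) ((z₂−1)/2)^{γ−ℓ−j} ], where C(·,·) denotes the binomial coefficient and each summand is understood to be zero whenever one of its binomial coefficients vanishes (so all exponents occurring in nonzero summands are nonnegative). -/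
/-!
Writing `u = (1+z)/2` and `w = (z-1)/2`, one has `(1 + z₁z₂)/2 = u₁u₂ + w₁w₂`, so the binomial
theorem turns `B#_{α,β,γ}` into `∑ₗ C(γ,ℓ) (u₁^{α+ℓ} w₁^{γ-ℓ}) (u₂^{β+ℓ} w₂^{γ-ℓ})`, a sum of products
of a polynomial in `z₁` and a polynomial in `z₂`. Hence `D^{(n,m)}` acts factorwise, and since
`∂u/∂z = ∂w/∂z = 1/2`, the general Leibniz rule gives
`∂ⁿ(uᵃ wᵇ) = ∑ₖ n! C(a,n-k) C(b,k) 2⁻ⁿ u^{a-(n-k)} w^{b-k}`.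
-/

open MvPolynomial

/-- The normalized three-directional box spline symbol
`B#_{α,β,γ}(z₁,z₂) = ((1+z₁)/2)^α ((1+z₂)/2)^β ((1+z₁z₂)/2)^γ`. -/
noncomputable def Bs (α β γ : ℕ) : MvPolynomial (Fin 2) ℝ :=
  (C (1 / 2 : ℝ) * (1 + X 0)) ^ α * (C (1 / 2 : ℝ) * (1 + X 1)) ^ β *
    (C (1 / 2 : ℝ) * (1 + X 0 * X 1)) ^ γ

/-- The formal partial derivative `D^{(n,m)} = ∂^{n+m}/∂z₁^n ∂z₂^m`. -/
noncomputable def Dnm (n m : ℕ) : Module.End ℝ (MvPolynomial (Fin 2) ℝ) :=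
  ((pderiv (0 : Fin 2)).toLinearMap ^ n) * ((pderiv (1 : Fin 2)).toLinearMap ^ m)

open Finset Nat

namespace Derivation

variable {R A : Type*} [CommSemiring R] [CommSemiring A] [Algebra R A] (D : Derivation R A A)

theorem iterate_apply_mul (n : ℕ) (a b : A) :
    D^[n] (a * b) = ∑ ij ∈ antidiagonal n, n.choose ij.1 • (D^[ij.1] a * D^[ij.2] b) := by
  induction n with
  | zero => simp
  | succ n ih =>
    rw [sum_antidiagonal_choose_succ_nsmul (fun i j => D^[i] a * D^[j] b) n]
    simp only [Function.iterate_succ_apply', ih, map_sum, map_nsmul, leibniz, smul_eq_mul,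
      smul_add, sum_add_distrib]
    congr 1
    refine sum_congr rfl fun ⟨i, j⟩ hij => ?_
    rw [n.choose_symm_of_eq_add (mem_antidiagonal.1 hij).symm, mul_comm]

theorem iterate_apply_mul_of_apply_eq_zero {a : A} (ha : D a = 0) (n : ℕ) (b : A) :
    D^[n] (a * b) = a * D^[n] b := by
  induction n with
  | zero => rfl
  | succ n ih => simp [Function.iterate_succ_apply', ih, leibniz, ha]

theorem iterate_apply_pow {u c : A} (hu : D u = c) (hc : D c = 0) (k a : ℕ) :
    D^[k] (u ^ a) = a.descFactorial k • (c ^ k * u ^ (a - k)) := by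
  induction k with
  | zero => simp
  | succ k ih =>
    rw [Function.iterate_succ_apply', ih, map_nsmul, leibniz, leibniz_pow, leibniz_pow, hc, hu,
      Nat.descFactorial_succ, Nat.sub_sub]
    simp only [smul_eq_mul, nsmul_eq_mul, mul_zero, smul_zero, add_zero]
    push_cast
    ring

theorem iterate_apply_pow_mul_pow {u w c : A} (hu : D u = c) (hw : D w = c) (hc : D c = 0)
    (n a b : ℕ) :
    D^[n] (u ^ a * w ^ b) = ∑ k ∈ range (n + 1),
      (n ! * a.choose (n - k) * b.choose k) • (c ^ n * u ^ (a - (n - k)) * w ^ (b - k)) := by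
  rw [iterate_apply_mul, ← Nat.sum_antidiagonal_swap]
  simp only [Prod.fst_swap, Prod.snd_swap]
  rw [Nat.sum_antidiagonal_eq_sum_range_succ
    (fun j i => n.choose i • (D^[i] (u ^ a) * D^[j] (w ^ b)))]
  refine sum_congr rfl fun k hk => ?_
  have hkn : k ≤ n := Nat.lt_succ_iff.mp (mem_range.mp hk)
  have hfact : n.choose (n - k) * (n - k) ! * k ! = n ! := by
    simpa [Nat.sub_sub_self hkn] using Nat.choose_mul_factorial_mul_factorial (Nat.sub_le n k)
  simp only [iterate_apply_pow D hu hc, iterate_apply_pow D hw hc,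
    Nat.descFactorial_eq_factorial_mul_choose]
  rw [← hfact]
  simp only [nsmul_eq_mul]
  push_cast
  rw [show c ^ n = c ^ (n - k) * c ^ k by rw [← pow_add, Nat.sub_add_cancel hkn]]
  ring

end Derivation

namespace MvPolynomial

variable {R σ : Type*}

theorem pderiv_pderiv_comm [CommRing R] (i j : σ) (f : MvPolynomial σ R) :
    pderiv i (pderiv j f) = pderiv j (pderiv i f) := by
  have hcomm : ⁅pderiv i, pderiv j⁆ = (0 : Derivation R (MvPolynomial σ R) (MvPolynomial σ R)) :=
    derivation_ext fun k => by
      classical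
      rw [Derivation.commutator_apply]
      simp [pderiv_X, Pi.single_apply, apply_ite]
  have := congr($hcomm f)
  rwa [Derivation.commutator_apply, Derivation.zero_apply, sub_eq_zero] at this

variable [Field R]

noncomputable def plusHalf (i : σ) : MvPolynomial σ R := C (1 / 2) * (1 + X i)

noncomputable def minusHalf (i : σ) : MvPolynomial σ R := C (1 / 2) * (X i - 1)

theorem pderiv_plusHalf (i : σ) : pderiv i (plusHalf i : MvPolynomial σ R) = C (1 / 2) := by
  simp [plusHalf]

theorem pderiv_minusHalf (i : σ) : pderiv i (minusHalf i : MvPolynomial σ R) = C (1 / 2) := by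
  simp [minusHalf]

theorem pderiv_plusHalf_pow_mul_minusHalf_pow_of_ne {i j : σ} (h : i ≠ j) (a b : ℕ) :
    pderiv j ((plusHalf i : MvPolynomial σ R) ^ a * minusHalf i ^ b) = 0 := by
  simp [plusHalf, minusHalf, pderiv_X_of_ne h]

theorem iterate_pderiv_plusHalf_pow_mul_minusHalf_pow (i : σ) (n a b : ℕ) :
    (pderiv i)^[n] ((plusHalf i : MvPolynomial σ R) ^ a * minusHalf i ^ b) =
      ∑ k ∈ range (n + 1),
        C ((n ! : R) / 2 ^ n * a.choose (n - k) * b.choose k) *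
          plusHalf i ^ (a - (n - k)) * minusHalf i ^ (b - k) := by
  rw [Derivation.iterate_apply_pow_mul_pow _ (pderiv_plusHalf i) (pderiv_minusHalf i) pderiv_C]
  refine sum_congr rfl fun k _ => ?_
  rw [nsmul_eq_mul, ← map_natCast (C : R →+* MvPolynomial σ R), ← map_pow, ← mul_assoc,
    ← mul_assoc, ← map_mul]
  congr 3
  push_cast
  rw [one_div_pow]
  ring

end MvPolynomial

theorem Dnm_mul {P Q : MvPolynomial (Fin 2) ℝ} (hP : pderiv 1 P = 0) (hQ : pderiv 0 Q = 0)
    (n m : ℕ) : Dnm n m (P * Q) = (pderiv 0)^[n] P * (pderiv 1)^[m] Q := by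
  have hQm : pderiv 0 ((pderiv 1)^[m] Q) = 0 := by
    rw [(Function.Commute.iterate_right (pderiv_pderiv_comm 0 1) m) Q, hQ,
      Function.iterate_fixed (map_zero _) m]
  simp only [Dnm, Module.End.mul_apply, Module.End.pow_apply, Derivation.coeFn_coe]
  rw [Derivation.iterate_apply_mul_of_apply_eq_zero _ hP, mul_comm,
    Derivation.iterate_apply_mul_of_apply_eq_zero _ hQm, mul_comm]

theorem half_one_add_X_mul_X :
    (C (1 / 2 : ℝ) * (1 + X 0 * X 1) : MvPolynomial (Fin 2) ℝ) =
      plusHalf 0 * plusHalf 1 + minusHalf 0 * minusHalf 1 := by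
  calc (C (1 / 2 : ℝ) * (1 + X 0 * X 1) : MvPolynomial (Fin 2) ℝ)
      = C (1 / 2 * (1 / 2) * 2) * (1 + X 0 * X 1) := by norm_num
    _ = plusHalf 0 * plusHalf 1 + minusHalf 0 * minusHalf 1 := by
      rw [map_mul, map_mul, map_ofNat, plusHalf, plusHalf, minusHalf, minusHalf]
      ring

theorem Bs_eq_sum (α β γ : ℕ) :
    Bs α β γ = ∑ ℓ ∈ range (γ + 1), C (γ.choose ℓ : ℝ) *
      ((plusHalf 0 ^ (α + ℓ) * minusHalf 0 ^ (γ - ℓ)) *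
        (plusHalf 1 ^ (β + ℓ) * minusHalf 1 ^ (γ - ℓ))) := by
  rw [show Bs α β γ = plusHalf 0 ^ α * plusHalf 1 ^ β * (C (1 / 2) * (1 + X 0 * X 1)) ^ γ from rfl,
    half_one_add_X_mul_X, (Commute.all _ _).add_pow, mul_sum]
  refine sum_congr rfl fun ℓ _ => ?_
  rw [← map_natCast C]
  ring

/-- Summands whose binomial coefficients vanish are zero, so the truncated natural subtraction in
the exponents is harmless. -/
theorem stmt_14 (n m α β γ : ℕ) :
    Dnm n m (Bs α β γ) =
      ∑ ℓ ∈ Finset.range (γ + 1),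
        C ((γ.choose ℓ : ℝ)) *
        (∑ i ∈ Finset.range (n + 1),
          C ((n.factorial : ℝ) / 2 ^ n * ((α + ℓ).choose (n - i) : ℝ) *
              ((γ - ℓ).choose i : ℝ)) *
            (C (1 / 2 : ℝ) * (1 + X 0)) ^ (α + ℓ - (n - i)) *
            (C (1 / 2 : ℝ) * (X 0 - 1)) ^ (γ - ℓ - i)) *
        (∑ j ∈ Finset.range (m + 1),
          C ((m.factorial : ℝ) / 2 ^ m * ((β + ℓ).choose (m - j) : ℝ) *
              ((γ - ℓ).choose j : ℝ)) *
            (C (1 / 2 : ℝ) * (1 + X 1)) ^ (β + ℓ - (m - j)) *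
            (C (1 / 2 : ℝ) * (X 1 - 1)) ^ (γ - ℓ - j)) := by
  rw [Bs_eq_sum, map_sum]
  refine sum_congr rfl fun ℓ _ => ?_
  rw [C_mul', map_smul, Dnm_mul (pderiv_plusHalf_pow_mul_minusHalf_pow_of_ne zero_ne_one _ _)
      (pderiv_plusHalf_pow_mul_minusHalf_pow_of_ne one_ne_zero _ _),
    iterate_pderiv_plusHalf_pow_mul_minusHalf_pow, iterate_pderiv_plusHalf_pow_mul_minusHalf_pow,
    ← C_mul', ← mul_assoc]
  rfl
end

section
/- For any triple (α,β,γ) ∈ ℕ³ and any k ∈ ℕ, the box spline symbol B#_{α,β,γ} belongs to the ideal power I^k if and only if k ≤ α + β + γ − max{α,β,γ}; that is, the maximal k with B#_{α,β,γ} ∈ I^k equals α + β + γ − max{α,β,γ}. -/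
/-!
The pairwise products of `1 + z₁`, `1 + z₂`, `1 + z₁z₂` vanish on `Z'` and their triple product
lies in `I²`. Grouping the factors of `B#_{α,β,γ}` into triples until one exponent dominates the sum
of the other two, and then into pairs, puts it in `I^(α+β+γ-max{α,β,γ})`.

Conversely, each point of `Z'` lies on a line `t ↦ (±(t-1), ±(t-1))` missing the other two points.
Restriction to it maps `I` into `(t)`, hence `I^k` into `(t^k)`, while it maps `B#_{α,β,γ}` to
`t^n` times a polynomial not vanishing at `0`, with `n = α+β`, `α+γ`, `β+γ` for the three points.
-/

open MvPolynomial

/-- The ideal of bivariate real polynomials vanishing at the three points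
`(−1,−1), (−1,1), (1,−1)`. -/
noncomputable def vI : Ideal (MvPolynomial (Fin 2) ℝ) where
  carrier := {p | ∀ ε ∈ ({![-1, -1], ![-1, 1], ![1, -1]} : Set (Fin 2 → ℝ)), eval ε p = 0}
  zero_mem' := by intro ε _; simp
  add_mem' := by intro a b ha hb ε hε; simp [ha ε hε, hb ε hε]
  smul_mem' := by intro c p hp ε hε; simp [smul_eq_mul, hp ε hε]

section ThreeFactors

variable {R : Type*} [CommSemiring R] {I : Ideal R} {a b c : R}

theorem pow_mul_pow_mul_pow_mem_pow_of_add_le (hac : a * c ∈ I) (hbc : b * c ∈ I)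
    {α β γ : ℕ} (h : α + β ≤ γ) : a ^ α * b ^ β * c ^ γ ∈ I ^ (α + β) := by
  obtain ⟨d, rfl⟩ := Nat.exists_eq_add_of_le h
  have hsplit : a ^ α * b ^ β * c ^ (α + β + d) = c ^ d * ((a * c) ^ α * (b * c) ^ β) := by
    ring
  rw [hsplit, pow_add]
  exact Ideal.mul_mem_left _ _
    (Ideal.mul_mem_mul (Ideal.pow_mem_pow hac α) (Ideal.pow_mem_pow hbc β))

theorem pow_mul_pow_mul_pow_mem_pow_of_dominant (hab : a * b ∈ I) (hac : a * c ∈ I)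
    (hbc : b * c ∈ I) {α β γ : ℕ} (h : α + β ≤ γ ∨ α + γ ≤ β ∨ β + γ ≤ α) :
    a ^ α * b ^ β * c ^ γ ∈ I ^ (α + β + γ - max α (max β γ)) := by
  rcases h with h | h | h
  · rw [show α + β + γ - max α (max β γ) = α + β by omega]
    exact pow_mul_pow_mul_pow_mem_pow_of_add_le hac hbc h
  · rw [show α + β + γ - max α (max β γ) = α + γ by omega,
      show a ^ α * b ^ β * c ^ γ = a ^ α * c ^ γ * b ^ β by ring]
    exact pow_mul_pow_mul_pow_mem_pow_of_add_le hab (mul_comm c b ▸ hbc) h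
  · rw [show α + β + γ - max α (max β γ) = β + γ by omega,
      show a ^ α * b ^ β * c ^ γ = b ^ β * c ^ γ * a ^ α by ring]
    exact pow_mul_pow_mul_pow_mem_pow_of_add_le (mul_comm a b ▸ hab) (mul_comm a c ▸ hac) h

theorem pow_mul_pow_mul_pow_mem_pow (hab : a * b ∈ I) (hac : a * c ∈ I) (hbc : b * c ∈ I)
    (habc : a * b * c ∈ I ^ 2) (α β γ : ℕ) :
    a ^ α * b ^ β * c ^ γ ∈ I ^ (α + β + γ - max α (max β γ)) := by
  induction α generalizing β γ with
  | zero => exact pow_mul_pow_mul_pow_mem_pow_of_dominant hab hac hbc (by omega)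
  | succ α ih =>
    rcases β with _ | β
    · exact pow_mul_pow_mul_pow_mem_pow_of_dominant hab hac hbc (by omega)
    rcases γ with _ | γ
    · exact pow_mul_pow_mul_pow_mem_pow_of_dominant hab hac hbc (by omega)
    have hmem := Ideal.mul_mem_mul habc (ih β γ)
    have hprod : a * b * c * (a ^ α * b ^ β * c ^ γ) =
        a ^ (α + 1) * b ^ (β + 1) * c ^ (γ + 1) := by
      ring
    have hexp : 2 + (α + β + γ - max α (max β γ)) =
        α + 1 + (β + 1) + (γ + 1) - max (α + 1) (max (β + 1) (γ + 1)) := by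
      omega
    rwa [← pow_add, hprod, hexp] at hmem

end ThreeFactors

theorem pow_dvd_map_of_mem_pow {R S : Type*} [CommSemiring R] [CommSemiring S] (φ : R →+* S)
    {I : Ideal R} {x : S} (hI : ∀ q ∈ I, x ∣ φ q) {k : ℕ} {q : R} (hq : q ∈ I ^ k) :
    x ^ k ∣ φ q := by
  have hle : I ≤ (Ideal.span {x}).comap φ := fun q hq ↦
    Ideal.mem_comap.2 (Ideal.mem_span_singleton.2 (hI q hq))
  have := Ideal.le_comap_pow φ k (Ideal.pow_right_mono hle k hq)
  rwa [Ideal.span_singleton_pow, Ideal.mem_comap, Ideal.mem_span_singleton] at this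

open Polynomial in
theorem Polynomial.le_of_X_pow_dvd_X_pow_mul {R : Type*} [CommRing R] [IsDomain R] {k n : ℕ}
    {w : R[X]} (hw : w.eval 0 ≠ 0) (h : X ^ k ∣ X ^ n * w) : k ≤ n := by
  by_contra! hnk
  have hdvd : X ^ n * X ∣ X ^ n * w := (pow_succ (X : R[X]) n ▸ pow_dvd_pow X hnk).trans h
  rw [mul_dvd_mul_iff_left (pow_ne_zero n X_ne_zero), X_dvd_iff, coeff_zero_eq_eval_zero] at hdvd
  exact hw hdvd

noncomputable def boxSymbol (α β γ : ℕ) : MvPolynomial (Fin 2) ℝ :=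
  (1 + X 0) ^ α * (1 + X 1) ^ β * (1 + X 0 * X 1) ^ γ

theorem Bs_eq_C_mul_boxSymbol (α β γ : ℕ) :
    Bs α β γ = C ((1 / 2) ^ (α + β + γ)) * boxSymbol α β γ := by
  simp only [Bs, boxSymbol, mul_pow, pow_add, map_mul, map_pow]
  ring

theorem mem_vI_of_eval {p : MvPolynomial (Fin 2) ℝ} (h₁ : eval ![-1, -1] p = 0)
    (h₂ : eval ![-1, 1] p = 0) (h₃ : eval ![1, -1] p = 0) : p ∈ vI := by
  rintro ε (rfl | rfl | rfl) <;> assumption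

/-- `2(1+x)(1+y)(1+xy) = (x²-1)(y²-1) + ((1+x)(1+y))²`, and `x²-1`, `y²-1`, `(1+x)(1+y)` all
vanish on the three points. -/
theorem triple_mem_vI_sq : (1 + X 0) * (1 + X 1) * (1 + X 0 * X 1) ∈ vI ^ 2 := by
  have h2 : IsUnit (2 : MvPolynomial (Fin 2) ℝ) := by
    rw [← map_ofNat C 2]
    exact (isUnit_iff_ne_zero.2 two_ne_zero).map C
  have hsq₀ : (X 0 ^ 2 - 1 : MvPolynomial (Fin 2) ℝ) ∈ vI := by
    apply mem_vI_of_eval <;> norm_num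
  have hsq₁ : (X 1 ^ 2 - 1 : MvPolynomial (Fin 2) ℝ) ∈ vI := by
    apply mem_vI_of_eval <;> norm_num
  have hprod : ((1 + X 0) * (1 + X 1) : MvPolynomial (Fin 2) ℝ) ∈ vI := by
    apply mem_vI_of_eval <;> norm_num
  have hsum := add_mem (Ideal.mul_mem_mul hsq₀ hsq₁) (Ideal.mul_mem_mul hprod hprod)
  rw [sq vI, ← Ideal.unit_mul_mem_iff_mem _ h2]
  convert hsum using 1
  ring

theorem boxSymbol_mem_vI_pow (α β γ : ℕ) :
    boxSymbol α β γ ∈ vI ^ (α + β + γ - max α (max β γ)) := by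
  refine pow_mul_pow_mul_pow_mem_pow ?_ ?_ ?_ triple_mem_vI_sq α β γ <;>
    apply mem_vI_of_eval <;> norm_num

local notation "T" => (Polynomial.X : Polynomial ℝ)

theorem X_dvd_aeval_of_mem_vI {p₁ p₂ : Polynomial ℝ}
    (hpt : ![p₁.eval 0, p₂.eval 0] ∈ ({![-1, -1], ![-1, 1], ![1, -1]} : Set (Fin 2 → ℝ)))
    {q : MvPolynomial (Fin 2) ℝ} (hq : q ∈ vI) : T ∣ aeval ![p₁, p₂] q := by
  rw [Polynomial.X_dvd_iff, Polynomial.coeff_zero_eq_eval_zero, ← Polynomial.coe_aeval_eq_eval,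
    comp_aeval_apply]
  have hpt' : (fun i ↦ Polynomial.aeval 0 (![p₁, p₂] i)) = ![p₁.eval 0, p₂.eval 0] := by
    ext i
    fin_cases i <;> simp
  rw [hpt', aeval_eq_eval]
  exact hq _ hpt

theorem le_of_mem_vI_pow_of_aeval_eq {p₁ p₂ w : Polynomial ℝ}
    (hpt : ![p₁.eval 0, p₂.eval 0] ∈ ({![-1, -1], ![-1, 1], ![1, -1]} : Set (Fin 2 → ℝ)))
    (hw : w.eval 0 ≠ 0) {q : MvPolynomial (Fin 2) ℝ} {k n : ℕ} (hq : q ∈ vI ^ k)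
    (hφ : aeval ![p₁, p₂] q = T ^ n * w) : k ≤ n :=
  Polynomial.le_of_X_pow_dvd_X_pow_mul hw <| hφ ▸ pow_dvd_map_of_mem_pow
    (aeval ![p₁, p₂]).toRingHom (fun _ ↦ X_dvd_aeval_of_mem_vI hpt) hq

theorem aeval_boxSymbol {S : Type*} [CommSemiring S] [Algebra ℝ S] (x y : S) (α β γ : ℕ) :
    aeval ![x, y] (boxSymbol α β γ) = (1 + x) ^ α * (1 + y) ^ β * (1 + x * y) ^ γ := by
  simp [boxSymbol]

theorem le_add_of_boxSymbol_mem_vI_pow {α β γ k : ℕ} (h : boxSymbol α β γ ∈ vI ^ k) :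
    k ≤ α + β ∧ k ≤ α + γ ∧ k ≤ β + γ := by
  refine ⟨le_of_mem_vI_pow_of_aeval_eq (p₁ := T - 1) (p₂ := T - 1)
      (w := (T ^ 2 - 2 * T + 2) ^ γ) (by norm_num) (by norm_num) h ?_,
    le_of_mem_vI_pow_of_aeval_eq (p₁ := T - 1) (p₂ := 1 - T)
      (w := (2 - T) ^ (β + γ)) (by norm_num) (by norm_num) h ?_,
    le_of_mem_vI_pow_of_aeval_eq (p₁ := 1 - T) (p₂ := T - 1)
      (w := (2 - T) ^ (α + γ)) (by norm_num) (by norm_num) h ?_⟩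
  · rw [aeval_boxSymbol]
    ring
  · rw [aeval_boxSymbol, show 1 + (T - 1) * (1 - T) = T * (2 - T) by ring, mul_pow]
    ring
  · rw [aeval_boxSymbol, show 1 + (1 - T) * (T - 1) = T * (2 - T) by ring, mul_pow]
    ring

/-- `B#_{α,β,γ} ∈ I^k` iff `k ≤ α + β + γ − max{α,β,γ}`; i.e. the maximal such `k`
equals `α + β + γ − max{α,β,γ}`. -/
theorem stmt_15 (α β γ k : ℕ) :
    Bs α β γ ∈ vI ^ k ↔ k ≤ α + β + γ - max α (max β γ) := by
  have hunit : IsUnit (C ((1 / 2 : ℝ) ^ (α + β + γ)) : MvPolynomial (Fin 2) ℝ) :=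
    (isUnit_iff_ne_zero.2 (by positivity)).map C
  rw [Bs_eq_C_mul_boxSymbol, Ideal.unit_mul_mem_iff_mem _ hunit]
  refine ⟨fun h ↦ ?_, fun hk ↦ Ideal.pow_le_pow_right hk (boxSymbol_mem_vI_pow α β γ)⟩
  obtain ⟨h₁, h₂, h₃⟩ := le_add_of_boxSymbol_mem_vI_pow h
  omega
end

section
/- For every k ≥ 1, the generating set I_k of I^k is minimal: for every box spline symbol B ∈ I_k, B does not belong to the ideal of ℝ[z₁,z₂] generated by the reduced set I_k \ {B}; in particular, I_k \ {B} does not generate the ideal I^k. -/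
open MvPolynomial

/-- The generating set `I_k = { B#_{β,β,α}, B#_{β,α,β}, B#_{α,β,β} :
α = 0,…,⌊k/2⌋, β = k − α }`. -/
def Iset (k : ℕ) : Set (MvPolynomial (Fin 2) ℝ) :=
  {q | ∃ α : ℕ, α ≤ k / 2 ∧
    (q = Bs (k - α) (k - α) α ∨ q = Bs (k - α) α (k - α) ∨ q = Bs α (k - α) (k - α))}


/-!
Each `B ∈ I_k` is cut off from the rest of `I_k` by an ideal `J ⊇ I_k \ {B}` with `B ∉ J`.
Restrict polynomials to the pencil of lines `z = P + u · d(x)` through a point `P` of `Z'`, keeping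
the slope parameter `x` symbolic. At `P = (-1, 1)` the symbol `B#_{a,b,c}` vanishes to order `a + c`
in `u` with leading coefficient a nonzero multiple of `x ^ c`; at `P = (-1, -1)` to order `a + b`
with leading coefficient a multiple of `x ^ b`. So `J` = "order at least `k`, no `x ^ m` in the
order-`k` coefficient" contains every element of `I_k` except the one it is tuned to. `J` also misses
`B#_{a,a+c,c} = B#_{1,1,0}^a B#_{0,1,1}^c ∈ I ^ k` (resp. `B#_{a,b,a+b} = B#_{1,0,1}^a B#_{0,1,1}^b`),
so the span of `I_k \ {B}` is not `I ^ k` either.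
-/

open scoped Polynomial

section JetIdeal

variable {A R : Type*} [CommSemiring A] [Semiring R]

/-- Closed under multiplication by `c` because the `u`-constant term of `χ c` is a scalar, which
cannot move the `x ^ m` coefficient of the order-`k` term. -/
noncomputable def jetIdeal (χ : A →+* R[X][X]) (hχ : ∀ p, (χ p).coeff 0 ∈ Set.range Polynomial.C)
    (k m : ℕ) : Ideal A where
  carrier := {p | Polynomial.X ^ k ∣ χ p ∧ ((χ p).coeff k).coeff m = 0}
  zero_mem' := by simp
  add_mem' := by
    rintro p q ⟨hp, hp'⟩ ⟨hq, hq'⟩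
    exact ⟨by simpa using dvd_add hp hq, by simp [hp', hq']⟩
  smul_mem' := by
    rintro c p ⟨⟨q, hq⟩, hp'⟩
    obtain ⟨r, hr⟩ := hχ c
    have hpk : (χ p).coeff k = q.coeff 0 := by
      rw [hq, Polynomial.coeff_X_pow_mul', if_pos le_rfl, Nat.sub_self]
    have hcp : χ (c • p) = Polynomial.X ^ k * (χ c * q) := by
      rw [smul_eq_mul, map_mul, hq, ← mul_assoc, ← Polynomial.X_pow_mul, mul_assoc]
    refine ⟨hcp ▸ dvd_mul_right _ _, ?_⟩
    rw [hcp, Polynomial.coeff_X_pow_mul', if_pos le_rfl, Nat.sub_self, Polynomial.mul_coeff_zero,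
      ← hr, Polynomial.coeff_C_mul, ← hpk, hp', mul_zero]

variable {χ : A →+* R[X][X]} {hχ : ∀ p, (χ p).coeff 0 ∈ Set.range Polynomial.C}

theorem mem_jetIdeal_iff_of_eq_X_pow_mul {p : A} {n k m : ℕ} {g : R[X][X]}
    (hp : χ p = Polynomial.X ^ n * g) (hk : k ≤ n) :
    p ∈ jetIdeal χ hχ k m ↔ (n = k → (g.coeff 0).coeff m = 0) := by
  have hdvd : Polynomial.X ^ k ∣ Polynomial.X ^ n * g := dvd_mul_of_dvd_left (pow_dvd_pow _ hk) g
  change Polynomial.X ^ k ∣ χ p ∧ _ ↔ _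
  rw [hp, Polynomial.coeff_X_pow_mul']
  rcases hk.eq_or_lt with rfl | hlt
  · simp [hdvd]
  · simp [hdvd, hlt.ne', not_le.2 hlt]

end JetIdeal

/-- Substitutes `zᵢ = Pᵢ + dᵢ(x) u` in `R[x][u]`: the restriction to the pencil of lines
through `P` with slopes `d(x)`, the parameter `x` of the line kept symbolic. -/
noncomputable def linePencil {σ R : Type*} [CommSemiring R] (P : σ → R) (d : σ → R[X]) :
    MvPolynomial σ R →ₐ[R] R[X][X] :=
  aeval fun i => Polynomial.C (Polynomial.C (P i)) + Polynomial.C (d i) * Polynomial.X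

theorem coeff_zero_linePencil {σ R : Type*} [CommSemiring R] (P : σ → R) (d : σ → R[X])
    (p : MvPolynomial σ R) : (linePencil P d p).coeff 0 = Polynomial.C (eval P p) := by
  have : Polynomial.constantCoeff.comp (linePencil P d).toRingHom = Polynomial.C.comp (eval P) :=
    MvPolynomial.ringHom_ext (by simp [linePencil]) (by simp [linePencil])
  exact RingHom.congr_fun this p

noncomputable def pencilJetIdeal {σ R : Type*} [CommSemiring R] (P : σ → R) (d : σ → R[X])
    (k m : ℕ) : Ideal (MvPolynomial σ R) :=
  jetIdeal (linePencil P d : MvPolynomial σ R →+* R[X][X])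
    (fun p => ⟨eval P p, (coeff_zero_linePencil P d p).symm⟩) k m

theorem mem_pencilJetIdeal_iff_of_eq_X_pow_mul {σ R : Type*} [CommSemiring R] {P : σ → R}
    {d : σ → R[X]} {p : MvPolynomial σ R} {n k m : ℕ} {g : R[X][X]}
    (hp : linePencil P d p = Polynomial.X ^ n * g) (hk : k ≤ n) :
    p ∈ pencilJetIdeal P d k m ↔ (n = k → (g.coeff 0).coeff m = 0) :=
  mem_jetIdeal_iff_of_eq_X_pow_mul hp hk

theorem notMem_span_diff_singleton_and_ne {R : Type*} [CommSemiring R] {S : Set R} {B w : R}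
    {I J : Ideal R} (hS : S \ {B} ⊆ J) (hB : B ∉ J) (hw : w ∈ I) (hwJ : w ∉ J) :
    B ∉ Ideal.span (S \ {B}) ∧ Ideal.span (S \ {B}) ≠ I := by
  have hle : Ideal.span (S \ {B}) ≤ J := Ideal.span_le.mpr hS
  exact ⟨fun h => hB (hle h), fun h => hwJ (hle (h ▸ hw))⟩

theorem Bs_eq_C_mul (a b c : ℕ) :
    Bs a b c = C ((1 / 2) ^ (a + b + c)) * ((1 + X 0) ^ a * (1 + X 1) ^ b * (1 + X 0 * X 1) ^ c) := by
  simp only [Bs, mul_pow, pow_add, map_mul, map_pow]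
  ring

theorem Bs_mul (a b c a' b' c' : ℕ) :
    Bs a b c * Bs a' b' c' = Bs (a + a') (b + b') (c + c') := by
  simp only [Bs, pow_add]
  ring

theorem Bs_pow (a b c n : ℕ) : Bs a b c ^ n = Bs (a * n) (b * n) (c * n) := by
  simp only [Bs, mul_pow, pow_mul]

theorem Bs_one_one_zero_mem_vI : Bs 1 1 0 ∈ vI := by
  rintro ε (rfl | rfl | rfl) <;> simp [Bs]

theorem Bs_one_zero_one_mem_vI : Bs 1 0 1 ∈ vI := by
  rintro ε (rfl | rfl | rfl) <;> simp [Bs]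

theorem Bs_zero_one_one_mem_vI : Bs 0 1 1 ∈ vI := by
  rintro ε (rfl | rfl | rfl) <;> simp [Bs]

theorem Bs_add_middle_mem_vI_pow (i l : ℕ) : Bs i (i + l) l ∈ vI ^ (i + l) := by
  have : Bs i (i + l) l = Bs 1 1 0 ^ i * Bs 0 1 1 ^ l := by
    rw [Bs_pow, Bs_pow, Bs_mul]
    congr 1 <;> omega
  rw [this, pow_add]
  exact Ideal.mul_mem_mul (Ideal.pow_mem_pow Bs_one_one_zero_mem_vI i)
    (Ideal.pow_mem_pow Bs_zero_one_one_mem_vI l)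

theorem Bs_add_last_mem_vI_pow (i l : ℕ) : Bs i l (i + l) ∈ vI ^ (i + l) := by
  have : Bs i l (i + l) = Bs 1 0 1 ^ i * Bs 0 1 1 ^ l := by
    rw [Bs_pow, Bs_pow, Bs_mul]
    congr 1 <;> omega
  rw [this, pow_add]
  exact Ideal.mul_mem_mul (Ideal.pow_mem_pow Bs_one_zero_one_mem_vI i)
    (Ideal.pow_mem_pow Bs_zero_one_one_mem_vI l)

theorem linePencil_neg_one_one_Bs (a b c : ℕ) :
    ∃ g, linePencil ![-1, 1] ![1, 1 - Polynomial.X] (Bs a b c) = Polynomial.X ^ (a + c) * g ∧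
      g.coeff 0 = Polynomial.C ((1 / 2) ^ (a + b + c) * 2 ^ b) * Polynomial.X ^ c := by
  refine ⟨Polynomial.C (Polynomial.C ((1 / 2) ^ (a + b + c))) *
    ((2 + Polynomial.C (1 - Polynomial.X) * Polynomial.X) ^ b *
      (Polynomial.C Polynomial.X + Polynomial.C (1 - Polynomial.X) * Polynomial.X) ^ c), ?_, ?_⟩
  · have h01 : linePencil ![-1, 1] ![1, 1 - Polynomial.X] (1 + X 0 * X 1 : MvPolynomial (Fin 2) ℝ) =
        Polynomial.X * (Polynomial.C Polynomial.X + Polynomial.C (1 - Polynomial.X) * Polynomial.X) := by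
      simp only [linePencil, map_add, map_mul, map_one, aeval_X, Matrix.cons_val_zero,
        Matrix.cons_val_one, map_neg, map_sub]
      ring
    simp only [Bs_eq_C_mul, map_mul, map_pow, h01, mul_pow]
    simp only [linePencil, map_add, map_one, aeval_X, aeval_C, Matrix.cons_val_zero,
      Matrix.cons_val_one, map_neg, Polynomial.algebraMap_apply, Polynomial.algebraMap_eq]
    ring
  · simp only [Polynomial.coeff_zero_eq_eval_zero, Polynomial.eval_mul, Polynomial.eval_pow,
      Polynomial.eval_C, Polynomial.eval_add, Polynomial.eval_X, Polynomial.eval_ofNat, map_mul,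
      map_pow, Polynomial.C_ofNat]
    ring

theorem linePencil_neg_one_neg_one_Bs (a b c : ℕ) :
    ∃ g, linePencil ![-1, -1] ![1, Polynomial.X] (Bs a b c) = Polynomial.X ^ (a + b) * g ∧
      g.coeff 0 = Polynomial.C ((1 / 2) ^ (a + b + c) * 2 ^ c) * Polynomial.X ^ b := by
  refine ⟨Polynomial.C (Polynomial.C ((1 / 2) ^ (a + b + c))) * (Polynomial.C Polynomial.X ^ b *
    (2 - (1 + Polynomial.C Polynomial.X) * Polynomial.X +
      Polynomial.C Polynomial.X * Polynomial.X ^ 2) ^ c), ?_, ?_⟩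
  · simp only [Bs_eq_C_mul, linePencil, map_mul, map_pow, map_add, map_one, aeval_X, aeval_C,
      map_neg, Matrix.cons_val_zero, Matrix.cons_val_one, Polynomial.algebraMap_apply,
      Polynomial.algebraMap_eq]
    ring
  · simp only [Polynomial.coeff_zero_eq_eval_zero, Polynomial.eval_mul, Polynomial.eval_pow,
      Polynomial.eval_C, Polynomial.eval_add, Polynomial.eval_sub, Polynomial.eval_X,
      Polynomial.eval_ofNat, Polynomial.eval_one, map_mul, map_pow, Polynomial.C_ofNat]
    ring

theorem Bs_mem_pencilJetIdeal_neg_one_one_iff {a b c k m : ℕ} (hk : k ≤ a + c) :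
    Bs a b c ∈ pencilJetIdeal ![-1, 1] ![1, 1 - Polynomial.X] k m ↔ (a + c = k → c ≠ m) := by
  obtain ⟨g, hg, hg0⟩ := linePencil_neg_one_one_Bs a b c
  rw [mem_pencilJetIdeal_iff_of_eq_X_pow_mul hg hk, hg0, Polynomial.coeff_C_mul_X_pow]
  simp [ne_comm]

theorem Bs_mem_pencilJetIdeal_neg_one_neg_one_iff {a b c k m : ℕ} (hk : k ≤ a + b) :
    Bs a b c ∈ pencilJetIdeal ![-1, -1] ![1, Polynomial.X] k m ↔ (a + b = k → b ≠ m) := by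
  obtain ⟨g, hg, hg0⟩ := linePencil_neg_one_neg_one_Bs a b c
  rw [mem_pencilJetIdeal_iff_of_eq_X_pow_mul hg hk, hg0, Polynomial.coeff_C_mul_X_pow]
  simp [ne_comm]

theorem Iset_diff_subset_pencilJetIdeal_neg_one_one {k a b c : ℕ} (hac : a + c = k)
    (hb : b = max a c) :
    Iset k \ {Bs a b c} ⊆
      pencilJetIdeal (R := ℝ) ![-1, 1] ![1, 1 - Polynomial.X] k c := by
  rintro g ⟨⟨α, hα, hg⟩, hne⟩
  rw [Set.mem_singleton_iff] at hne
  rcases hg with rfl | rfl | rfl <;>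
    exact (Bs_mem_pencilJetIdeal_neg_one_one_iff (by omega)).2
      fun _ _ => hne (by congr 1 <;> omega)

theorem Iset_diff_subset_pencilJetIdeal_neg_one_neg_one {k a b c : ℕ} (hab : a + b = k)
    (hc : c = max a b) :
    Iset k \ {Bs a b c} ⊆
      pencilJetIdeal (R := ℝ) ![-1, -1] ![1, Polynomial.X] k b := by
  rintro g ⟨⟨α, hα, hg⟩, hne⟩
  rw [Set.mem_singleton_iff] at hne
  rcases hg with rfl | rfl | rfl <;>
    exact (Bs_mem_pencilJetIdeal_neg_one_neg_one_iff (by omega)).2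
      fun _ _ => hne (by congr 1 <;> omega)

theorem Bs_notMem_span_Iset_diff_of_neg_one_one {k a b c : ℕ} (hac : a + c = k)
    (hb : b = max a c) :
    Bs a b c ∉ Ideal.span (Iset k \ {Bs a b c}) ∧ Ideal.span (Iset k \ {Bs a b c}) ≠ vI ^ k := by
  subst hac
  refine notMem_span_diff_singleton_and_ne (Iset_diff_subset_pencilJetIdeal_neg_one_one rfl hb)
    ?_ (Bs_add_middle_mem_vI_pow a c) ?_ <;>
  · rw [Bs_mem_pencilJetIdeal_neg_one_one_iff le_rfl]
    exact fun h => h rfl rfl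

theorem Bs_notMem_span_Iset_diff_of_neg_one_neg_one {k a b c : ℕ} (hab : a + b = k)
    (hc : c = max a b) :
    Bs a b c ∉ Ideal.span (Iset k \ {Bs a b c}) ∧ Ideal.span (Iset k \ {Bs a b c}) ≠ vI ^ k := by
  subst hab
  refine notMem_span_diff_singleton_and_ne (Iset_diff_subset_pencilJetIdeal_neg_one_neg_one rfl hc)
    ?_ (Bs_add_last_mem_vI_pow a b) ?_ <;>
  · rw [Bs_mem_pencilJetIdeal_neg_one_neg_one_iff le_rfl]
    exact fun h => h rfl rfl

theorem stmt_16_general (k : ℕ) (B : MvPolynomial (Fin 2) ℝ) (hB : B ∈ Iset k) :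
    B ∉ Ideal.span (Iset k \ {B}) ∧ Ideal.span (Iset k \ {B}) ≠ vI ^ k := by
  obtain ⟨α, hα, rfl | rfl | rfl⟩ := hB
  · exact Bs_notMem_span_Iset_diff_of_neg_one_one (by omega) (by omega)
  · exact Bs_notMem_span_Iset_diff_of_neg_one_neg_one (by omega) (by omega)
  · exact Bs_notMem_span_Iset_diff_of_neg_one_one (by omega) (by omega)

/-- Minimality of the generating set `I_k` of `I^k`: removing any element `B` of `I_k`
yields a set that does not contain `B` in its span; in particular it no longer
generates `I^k`. -/
theorem stmt_16 (k : ℕ) (hk : 1 ≤ k) (B : MvPolynomial (Fin 2) ℝ) (hB : B ∈ Iset k) :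
    B ∉ Ideal.span (Iset k \ {B}) ∧ Ideal.span (Iset k \ {B}) ≠ vI ^ k :=
  stmt_16_general k B hB
end

section
/- For any quadruple (α,β,γ,δ) ∈ ℕ⁴ and any k ∈ ℕ, the polynomial B̃#_{α,β,γ,δ} belongs to the ideal power I^k if and only if k ≤ α + β + γ + δ − max{α, β, γ+δ}; that is, the maximal k with B̃#_{α,β,γ,δ} ∈ I^k equals α + β + γ + δ − max{α, β, γ+δ}. Equivalently, B̃#_{α,β,γ,δ} ∈ I^k if and only if B#_{α,β,γ+δ} ∈ I^k. -/
/-!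
The three points are distinct, so their maximal ideals `𝔪` are pairwise coprime and
`I ^ k = 𝔪₁ ^ k ⊓ 𝔪₂ ^ k ⊓ 𝔪₃ ^ k`. At each point `B̃#` is a product of linear factors; the `N`
factors vanishing there put it in `𝔪 ^ N`, and along a line through the point each of them
vanishes to order exactly one while the others do not vanish, so the restriction is `t ^ N` times
a unit at `t = 0` and `B̃# ∉ 𝔪 ^ (N + 1)`. Hence `B̃# ∈ I ^ k` iff
`k ≤ min (α + β) (min (α + γ + δ) (β + γ + δ)) = α + β + γ + δ - max α (max β (γ + δ))`,
a bound that depends on `γ` and `δ` only through `γ + δ`.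
-/

open MvPolynomial

/-- The polynomial version of the normalized four-directional box spline symbol,
`B̃#_{α,β,γ,δ}(z₁,z₂) = ((1+z₁)/2)^α ((1+z₂)/2)^β ((1+z₁z₂)/2)^γ ((z₁+z₂)/2)^δ`. -/
noncomputable def Bs4 (α β γ δ : ℕ) : MvPolynomial (Fin 2) ℝ :=
  Bs α β γ * (C (1 / 2 : ℝ) * (X 0 + X 1)) ^ δ

namespace Ideal

theorem inf_inf_pow_of_isCoprime {R : Type*} [CommRing R] {I J L : Ideal R}
    (hIJ : IsCoprime I J) (hIL : IsCoprime I L) (hJL : IsCoprime J L) (k : ℕ) :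
    (I ⊓ J ⊓ L) ^ k = I ^ k ⊓ J ^ k ⊓ L ^ k := by
  have inf_pow_eq_mul_pow (n : ℕ) : I ^ n ⊓ J ^ n ⊓ L ^ n = (I * J * L) ^ n := by
    rw [← mul_eq_inf_of_isCoprime hIJ.pow, ← mul_eq_inf_of_isCoprime (hIL.pow.mul_left hJL.pow),
      mul_pow, mul_pow]
  have inf_eq_mul := inf_pow_eq_mul_pow 1
  simp only [pow_one] at inf_eq_mul
  rw [inf_eq_mul, inf_pow_eq_mul_pow]

theorem pow_mul_pow_mem_pow {R : Type*} [CommRing R] {I : Ideal R} {a b : R} (ha : a ∈ I)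
    (hb : b ∈ I) (m n : ℕ) : a ^ m * b ^ n ∈ I ^ (m + n) :=
  pow_add I m n ▸ mul_mem_mul (pow_mem_pow ha m) (pow_mem_pow hb n)

end Ideal

theorem Polynomial.le_of_X_pow_dvd_X_pow_mul_s18 {R : Type*} [CommRing R] {r : Polynomial R}
    {k N : ℕ} (hr : r.eval 0 ≠ 0) (h : X ^ k ∣ X ^ N * r) : k ≤ N := by
  by_contra! hNk
  have := X_pow_dvd_iff.mp h N hNk
  rw [coeff_X_pow_mul', if_pos le_rfl, Nat.sub_self, coeff_zero_eq_eval_zero] at this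
  exact hr this

namespace MvPolynomial

variable {σ K : Type*} [Field K]

theorem vanishingIdeal_singleton_injective :
    Function.Injective (fun x : σ → K ↦ vanishingIdeal K {x}) := by
  intro x y (hxy : vanishingIdeal K {x} = vanishingIdeal K {y})
  funext i
  have hy : X i - C (y i) ∈ vanishingIdeal K {y} := by simp
  rw [← hxy, mem_vanishingIdeal_singleton_iff] at hy
  simpa [sub_eq_zero] using hy

theorem isCoprime_vanishingIdeal_singleton {x y : σ → K} (h : x ≠ y) :
    IsCoprime (vanishingIdeal K {x}) (vanishingIdeal K {y}) :=
  Ideal.isCoprime_iff_sup_eq.mpr <| Ideal.IsMaximal.coprime_of_ne inferInstance inferInstance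
    (vanishingIdeal_singleton_injective.ne h)

theorem X_pow_dvd_aeval_of_mem_vanishingIdeal_pow {x : σ → K} {v : σ → Polynomial K}
    (hv : ∀ i, (v i).eval 0 = x i) {p : MvPolynomial σ K} {k : ℕ}
    (hp : p ∈ vanishingIdeal K {x} ^ k) : Polynomial.X ^ k ∣ aeval v p := by
  have hle : vanishingIdeal K {x} ≤ (Ideal.span {Polynomial.X}).comap (aeval v) := by
    intro q hq
    have heval : (aeval v q).eval 0 = aeval x q := by
      rw [← Polynomial.coe_aeval_eq_eval, ← AlgHom.comp_apply, comp_aeval]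
      simp [hv]
    rw [Ideal.mem_comap, Ideal.mem_span_singleton, Polynomial.X_dvd_iff,
      Polynomial.coeff_zero_eq_eval_zero, heval]
    exact (mem_vanishingIdeal_singleton_iff x q).mp hq
  have := Ideal.le_comap_pow _ k (Ideal.pow_right_mono hle k hp)
  rwa [Ideal.mem_comap, Ideal.span_singleton_pow, Ideal.mem_span_singleton] at this

theorem mem_vanishingIdeal_singleton_pow_iff_le {x : σ → K} {v : σ → Polynomial K}
    (hv : ∀ i, (v i).eval 0 = x i) {p : MvPolynomial σ K} {N : ℕ} {r : Polynomial K}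
    (hpv : aeval v p = Polynomial.X ^ N * r) (hr : r.eval 0 ≠ 0)
    (hp : p ∈ vanishingIdeal K {x} ^ N) (k : ℕ) : p ∈ vanishingIdeal K {x} ^ k ↔ k ≤ N :=
  ⟨fun hk ↦ Polynomial.le_of_X_pow_dvd_X_pow_mul_s18 hr
    (hpv ▸ X_pow_dvd_aeval_of_mem_vanishingIdeal_pow hv hk),
   fun hk ↦ Ideal.pow_le_pow_right hk hp⟩

end MvPolynomial

section BoxSpline

local notation "𝔪[" x "]" => vanishingIdeal ℝ {(x : Fin 2 → ℝ)}

local notation "ℓ₁" => (C (1 / 2 : ℝ) * (1 + X 0) : MvPolynomial (Fin 2) ℝ)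

local notation "ℓ₂" => (C (1 / 2 : ℝ) * (1 + X 1) : MvPolynomial (Fin 2) ℝ)

local notation "ℓ₃" => (C (1 / 2 : ℝ) * (1 + X 0 * X 1) : MvPolynomial (Fin 2) ℝ)

local notation "ℓ₄" => (C (1 / 2 : ℝ) * (X 0 + X 1) : MvPolynomial (Fin 2) ℝ)

local notation "t" => (Polynomial.X : Polynomial ℝ)

local notation "½" => Polynomial.C (1 / 2 : ℝ)

theorem Bs4_mem_vanishingIdeal_pow_iff_neg_neg (α β γ δ k : ℕ) :
    Bs4 α β γ δ ∈ 𝔪[![-1, -1]] ^ k ↔ k ≤ α + β := by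
  refine mem_vanishingIdeal_singleton_pow_iff_le (v := ![t - 1, t - 1])
    (r := ½ ^ (α + β) * (½ * (1 + (t - 1) ^ 2)) ^ γ * (½ * (t - 1 + (t - 1))) ^ δ)
    (by simp [Fin.forall_fin_two]) (by simp [Bs4, Bs]; ring) (by simp) ?_ k
  have h₁ : ℓ₁ ∈ 𝔪[![-1, -1]] := by simp
  have h₂ : ℓ₂ ∈ 𝔪[![-1, -1]] := by simp
  exact Ideal.mul_mem_right _ _ <| Ideal.mul_mem_right _ _ <| Ideal.pow_mul_pow_mem_pow h₁ h₂ α β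

theorem Bs4_mem_vanishingIdeal_pow_iff_neg_pos (α β γ δ k : ℕ) :
    Bs4 α β γ δ ∈ 𝔪[![-1, 1]] ^ k ↔ k ≤ α + γ + δ := by
  refine mem_vanishingIdeal_singleton_pow_iff_le (v := ![t - 1, 1])
    (r := ½ ^ (α + γ + δ) * (½ * (1 + 1)) ^ β)
    (by simp [Fin.forall_fin_two]) (by simp [Bs4, Bs]; ring) (by simp) ?_ k
  have h₁ : ℓ₁ ∈ 𝔪[![-1, 1]] := by simp
  have h₃ : ℓ₃ ∈ 𝔪[![-1, 1]] := by simp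
  have h₄ : ℓ₄ ∈ 𝔪[![-1, 1]] := by simp
  have hBs4 : Bs4 α β γ δ = ℓ₁ ^ α * ℓ₃ ^ γ * ℓ₄ ^ δ * ℓ₂ ^ β := by unfold Bs4 Bs; ring
  rw [hBs4, pow_add]
  exact Ideal.mul_mem_right _ _ <|
    Ideal.mul_mem_mul (Ideal.pow_mul_pow_mem_pow h₁ h₃ α γ) (Ideal.pow_mem_pow h₄ δ)

theorem Bs4_mem_vanishingIdeal_pow_iff_pos_neg (α β γ δ k : ℕ) :
    Bs4 α β γ δ ∈ 𝔪[![1, -1]] ^ k ↔ k ≤ β + γ + δ := by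
  refine mem_vanishingIdeal_singleton_pow_iff_le (v := ![1, t - 1])
    (r := ½ ^ (β + γ + δ) * (½ * (1 + 1)) ^ α)
    (by simp [Fin.forall_fin_two]) (by simp [Bs4, Bs]; ring) (by simp) ?_ k
  have h₂ : ℓ₂ ∈ 𝔪[![1, -1]] := by simp
  have h₃ : ℓ₃ ∈ 𝔪[![1, -1]] := by simp
  have h₄ : ℓ₄ ∈ 𝔪[![1, -1]] := by simp
  have hBs4 : Bs4 α β γ δ = ℓ₂ ^ β * ℓ₃ ^ γ * ℓ₄ ^ δ * ℓ₁ ^ α := by unfold Bs4 Bs; ring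
  rw [hBs4, pow_add]
  exact Ideal.mul_mem_right _ _ <|
    Ideal.mul_mem_mul (Ideal.pow_mul_pow_mem_pow h₂ h₃ β γ) (Ideal.pow_mem_pow h₄ δ)

theorem vI_eq_inf : vI = 𝔪[![-1, -1]] ⊓ 𝔪[![-1, 1]] ⊓ 𝔪[![1, -1]] := by
  ext p
  simp only [vI, Submodule.mem_mk, AddSubmonoid.mem_mk, AddSubsemigroup.mem_mk, Set.mem_ofPred_eq,
    Set.forall_mem_insert, Set.mem_singleton_iff, forall_eq, Ideal.mem_inf,
    mem_vanishingIdeal_singleton_iff, aeval_eq_eval, and_assoc]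

theorem vI_pow_eq_inf (k : ℕ) :
    vI ^ k = 𝔪[![-1, -1]] ^ k ⊓ 𝔪[![-1, 1]] ^ k ⊓ 𝔪[![1, -1]] ^ k := by
  have ne_of_apply_ne {x y : Fin 2 → ℝ} (i : Fin 2) (h : x i ≠ y i) : x ≠ y :=
    fun hxy ↦ h (congrFun hxy i)
  rw [vI_eq_inf]
  exact Ideal.inf_inf_pow_of_isCoprime
    (isCoprime_vanishingIdeal_singleton (ne_of_apply_ne 1 (by norm_num)))
    (isCoprime_vanishingIdeal_singleton (ne_of_apply_ne 0 (by norm_num)))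
    (isCoprime_vanishingIdeal_singleton (ne_of_apply_ne 0 (by norm_num))) k

end BoxSpline

theorem Bs4_mem_vI_pow_iff (α β γ δ k : ℕ) :
    Bs4 α β γ δ ∈ vI ^ k ↔ k ≤ α + β ∧ k ≤ α + γ + δ ∧ k ≤ β + γ + δ := by
  rw [vI_pow_eq_inf, Ideal.mem_inf, Ideal.mem_inf, Bs4_mem_vanishingIdeal_pow_iff_neg_neg,
    Bs4_mem_vanishingIdeal_pow_iff_neg_pos, Bs4_mem_vanishingIdeal_pow_iff_pos_neg, and_assoc]

/-- `B̃#_{α,β,γ,δ} ∈ I^k` iff `k ≤ α + β + γ + δ − max{α, β, γ+δ}` (so the maximal such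
`k` equals `α + β + γ + δ − max{α, β, γ+δ}`); equivalently, `B̃#_{α,β,γ,δ} ∈ I^k` iff
`B#_{α,β,γ+δ} ∈ I^k`. -/
theorem stmt_18 (α β γ δ k : ℕ) :
    (Bs4 α β γ δ ∈ vI ^ k ↔ k ≤ α + β + γ + δ - max α (max β (γ + δ))) ∧
    (Bs4 α β γ δ ∈ vI ^ k ↔ Bs α β (γ + δ) ∈ vI ^ k) := by
  have hBs : Bs α β (γ + δ) = Bs4 α β (γ + δ) 0 := by rw [Bs4, pow_zero, mul_one]
  rw [hBs, Bs4_mem_vI_pow_iff, Bs4_mem_vI_pow_iff]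
  omega
end
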